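/- arXiv:2301.08680 — 6 statements merged into one kernel-verified Lean document; each statement's English description precedes it below -/
import Mathlib

section
/- For any real numbers x_1, ..., x_n in [0,1] with ∑_i x_i ≤ 1, we have 1 - ∏_{i=1}^n (1 - x_i) ≥ (1 - 1/e) · ∑_{i=1}^n x_i. -/
theorem stmt1 (n : ℕ) (x : Fin n → ℝ) (hx : ∀ i, x i ∈ Set.Icc (0:ℝ) 1)
    (hsum : ∑ i, x i ≤ 1) :
    (1 - (Real.exp 1)⁻¹) * ∑ i, x i ≤ 1 - ∏ i, (1 - x i) := by
  set s := ∑ i, x i with hs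
  have hs0 : 0 ≤ s := Finset.sum_nonneg fun i _ => (hx i).1
  have hprod : ∏ i, (1 - x i) ≤ Real.exp (-s) := by
    calc ∏ i, (1 - x i) ≤ ∏ i, Real.exp (-x i) := by
          apply Finset.prod_le_prod
          · intro i _; linarith [(hx i).2]
          · intro i _
            have := Real.add_one_le_exp (-x i)
            linarith
      _ = Real.exp (-s) := by
          rw [← Real.exp_sum, hs, ← Finset.sum_neg_distrib]
  have hconv : Real.exp (-s) ≤ (1 - s) * Real.exp 0 + s * Real.exp (-1) := by
    have := convexOn_exp.2 (Set.mem_univ (0:ℝ)) (Set.mem_univ (-1:ℝ))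
      (by linarith : (0:ℝ) ≤ 1 - s) hs0 (by ring)
    simpa [smul_eq_mul, mul_comm] using this
  have he : Real.exp (-1) = (Real.exp 1)⁻¹ := Real.exp_neg 1
  rw [Real.exp_zero] at hconv
  nlinarith [hprod, hconv]
end

section
/- Consider the online level-set rounding: given x_1,...,x_n ∈ [0,1] with partial sums s_t = ∑_{t'≤t} x_{t'}, define S_0 = 0 and, inductively, X_t ∈ {0,1} with S_t = S_{t-1} + X_t, where X_t = 1 deterministically if S_{t-1} < ⌊s_t⌋, X_t = 0 deterministically if S_{t-1} = ⌈s_t⌉ with s_t non-integral, and otherwise X_t = 1 with probability p_t equal to x_t/(⌊s_{t-1}⌋+1-s_{t-1}) if S_{t-1} = ⌊s_t⌋ = ⌊s_{t-1}⌋, or (s_t - ⌊s_t⌋)/(s_{t-1} - ⌊s_{t-1}⌋) if S_{t-1} = ⌊s_t⌋ > ⌊s_{t-1}⌋. Then all the probabilities p_t lie in [0,1], S_t ∈ {⌊s_t⌋, ⌈s_t⌉} almost surely for all t, and E[X_t] = x_t for all t. -/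
open scoped Classical

/-- Online level-set rounding: well-definedness of the transition probabilities,
the prefix-sum (floor/ceiling) property, and marginal preservation. -/
theorem stmt13 {Ω : Type*} [Fintype Ω] (μ : Ω → ℝ) (hμ0 : ∀ ω, 0 ≤ μ ω)
    (hμ1 : ∑ ω, μ ω = 1) (n : ℕ)
    (x : ℕ → ℝ) (hx : ∀ t, 1 ≤ t → t ≤ n → x t ∈ Set.Icc (0:ℝ) 1)
    (s : ℕ → ℝ) (hs : ∀ t, s t = ∑ t' ∈ Finset.Icc 1 t, x t')
    (X : ℕ → Ω → ℤ) (hX01 : ∀ t ω, X t ω = 0 ∨ X t ω = 1)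
    (S : ℕ → Ω → ℤ) (hS : ∀ t ω, S t ω = ∑ t' ∈ Finset.Icc 1 t, X t' ω)
    (p : ℕ → ℤ → ℝ)
    (hp : ∀ t v, p t v =
      if v < ⌊s t⌋ then 1
      else if v = ⌊s t⌋ then
        (if ⌊s t⌋ = ⌊s (t - 1)⌋ then x t / (⌊s (t - 1)⌋ + 1 - s (t - 1))
         else (s t - ⌊s t⌋) / (s (t - 1) - ⌊s (t - 1)⌋))
      else 0)
    (hcond : ∀ t, 1 ≤ t → t ≤ n → ∀ v : ℤ,
      (∑ ω, if S (t - 1) ω = v ∧ X t ω = 1 then μ ω else 0)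
        = p t v * ∑ ω, if S (t - 1) ω = v then μ ω else 0) :
    (∀ t, 1 ≤ t → t ≤ n → ∀ v : ℤ,
        (∑ ω, if S (t - 1) ω = v then μ ω else 0) ≠ 0 → p t v ∈ Set.Icc (0:ℝ) 1)
    ∧ (∀ t, t ≤ n → ∀ ω, μ ω ≠ 0 → S t ω = ⌊s t⌋ ∨ S t ω = ⌈s t⌉)
    ∧ (∀ t, 1 ≤ t → t ≤ n → ∑ ω, μ ω * (X t ω : ℝ) = x t) := by
  have hs0 : s 0 = 0 := by rw [hs]; simp
  have hS0 : ∀ ω, S 0 ω = 0 := by intro ω; rw [hS]; simp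
  have hsstep : ∀ u : ℕ, s (u + 1) = s u + x (u + 1) := by
    intro u
    rw [hs (u + 1), hs u, Finset.sum_Icc_succ_top (by omega : 1 ≤ u + 1)]
  have hSstep : ∀ u : ℕ, ∀ ω, S (u + 1) ω = S u ω + X (u + 1) ω := by
    intro u ω
    rw [hS (u + 1), hS u, Finset.sum_Icc_succ_top (by omega : 1 ≤ u + 1)]
  -- clean versions of hp and hcond at successor times
  have hp' : ∀ u : ℕ, ∀ v : ℤ, p (u + 1) v =
      if v < ⌊s (u + 1)⌋ then 1
      else if v = ⌊s (u + 1)⌋ then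
        (if ⌊s (u + 1)⌋ = ⌊s u⌋ then x (u + 1) / (⌊s u⌋ + 1 - s u)
         else (s (u + 1) - ⌊s (u + 1)⌋) / (s u - ⌊s u⌋))
      else 0 := by
    intro u v
    have := hp (u + 1) v
    simpa only [Nat.add_sub_cancel] using this
  have hcond' : ∀ u : ℕ, u + 1 ≤ n → ∀ v : ℤ,
      (∑ ω, if S u ω = v ∧ X (u + 1) ω = 1 then μ ω else 0)
        = p (u + 1) v * ∑ ω, if S u ω = v then μ ω else 0 := by
    intro u hun v
    have := hcond (u + 1) (by omega) hun v
    simpa only [Nat.add_sub_cancel] using this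
  -- support-zero lemma
  have hsupp_zero : ∀ t : ℕ, (∀ ω, μ ω ≠ 0 → S t ω = ⌊s t⌋ ∨ S t ω = ⌈s t⌉) →
      ∀ v : ℤ, v ≠ ⌊s t⌋ → v ≠ ⌈s t⌉ → (∑ ω, if S t ω = v then μ ω else 0) = 0 := by
    intro t hsupp v hv1 hv2
    refine Finset.sum_eq_zero fun ω _ => ?_
    by_cases hω : μ ω = 0
    · split_ifs <;> simp [hω]
    · have hne : S t ω ≠ v := by
        intro hc
        rcases hsupp ω hω with h | h
        · exact hv1 (by rw [← hc, h])
        · exact hv2 (by rw [← hc, h])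
      simp [hne]
  -- total mass
  have htotal : ∀ t : ℕ, (∀ ω, μ ω ≠ 0 → S t ω = ⌊s t⌋ ∨ S t ω = ⌈s t⌉) →
      (∑ ω, if S t ω = ⌊s t⌋ then μ ω else 0)
        + (∑ ω, if S t ω = ⌊s t⌋ + 1 then μ ω else 0) = 1 := by
    intro t hsupp
    rw [← Finset.sum_add_distrib, ← hμ1]
    refine Finset.sum_congr rfl fun ω _ => ?_
    by_cases hω : μ ω = 0
    · split_ifs <;> simp [hω]
    · have hc := Int.ceil_le_floor_add_one (s t)
      have hf := Int.floor_le_ceil (s t)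
      have h2 : S t ω = ⌊s t⌋ ∨ S t ω = ⌊s t⌋ + 1 := by
        rcases hsupp ω hω with h | h <;> omega
      rcases h2 with h | h
      · rw [if_pos h, if_neg (by omega), add_zero]
      · rw [if_neg (by omega), if_pos h, zero_add]
  -- forcing lemmas
  have hforce1 : ∀ u : ℕ, u + 1 ≤ n → ∀ v : ℤ, p (u + 1) v = 1 →
      ∀ ω, μ ω ≠ 0 → S u ω = v → X (u + 1) ω = 1 := by
    intro u hun v hp1 ω hω hSv
    by_contra hX
    have hX0 : X (u + 1) ω = 0 := (hX01 (u + 1) ω).resolve_right hX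
    have h := hcond' u hun v
    rw [hp1, one_mul] at h
    have hz : ∑ ω', ((if S u ω' = v then μ ω' else 0)
        - (if S u ω' = v ∧ X (u + 1) ω' = 1 then μ ω' else 0)) = 0 := by
      rw [Finset.sum_sub_distrib, h, sub_self]
    have hnn : ∀ i ∈ Finset.univ, (0:ℝ) ≤ (if S u i = v then μ i else 0)
        - (if S u i = v ∧ X (u + 1) i = 1 then μ i else 0) := by
      intro i _
      split_ifs with ha hb hb
      · simp
      · simpa using hμ0 i
      · exact absurd hb.1 ha
      · simp
    have hterm := (Finset.sum_eq_zero_iff_of_nonneg hnn).mp hz ω (Finset.mem_univ ω)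
    rw [if_pos hSv, if_neg (by simp [hX0])] at hterm
    simp at hterm
    exact hω hterm
  have hforce0 : ∀ u : ℕ, u + 1 ≤ n → ∀ v : ℤ, p (u + 1) v = 0 →
      ∀ ω, μ ω ≠ 0 → S u ω = v → X (u + 1) ω = 0 := by
    intro u hun v hp0 ω hω hSv
    by_contra hX
    have hX1 : X (u + 1) ω = 1 := (hX01 (u + 1) ω).resolve_left hX
    have h := hcond' u hun v
    rw [hp0, zero_mul] at h
    have hnn : ∀ i ∈ Finset.univ, (0:ℝ) ≤
        (if S u i = v ∧ X (u + 1) i = 1 then μ i else 0) := by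
      intro i _; split_ifs
      · exact hμ0 i
      · exact le_rfl
    have hterm := (Finset.sum_eq_zero_iff_of_nonneg hnn).mp h ω (Finset.mem_univ ω)
    rw [if_pos ⟨hSv, hX1⟩] at hterm
    exact hω hterm
  -- splitting lemma for the distribution step
  have key_split : ∀ u : ℕ, u + 1 ≤ n → ∀ w : ℤ,
      (∑ ω, if S (u + 1) ω = w then μ ω else 0)
        = (1 - p (u + 1) w) * (∑ ω, if S u ω = w then μ ω else 0)
          + p (u + 1) (w - 1) * (∑ ω, if S u ω = w - 1 then μ ω else 0) := by
    intro u hun w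
    have e1 := hcond' u hun w
    have e2 := hcond' u hun (w - 1)
    have hpt : ∀ ω, (if S (u + 1) ω = w then μ ω else 0)
        = ((if S u ω = w then μ ω else 0)
            - (if S u ω = w ∧ X (u + 1) ω = 1 then μ ω else 0))
          + (if S u ω = w - 1 ∧ X (u + 1) ω = 1 then μ ω else 0) := by
      intro ω
      have hst := hSstep u ω
      rcases hX01 (u + 1) ω with h0 | h1'
      · rw [h0, add_zero] at hst
        rw [hst]
        simp [h0]
      · rw [h1'] at hst
        rw [hst]
        simp only [h1', and_true, show (S u ω + 1 = w) ↔ (S u ω = w - 1) from by omega]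
        by_cases hc1 : S u ω = w - 1 <;> by_cases hc2 : S u ω = w <;>
          simp [hc1, hc2]
    calc (∑ ω, if S (u + 1) ω = w then μ ω else 0)
        = ∑ ω, (((if S u ω = w then μ ω else 0)
            - (if S u ω = w ∧ X (u + 1) ω = 1 then μ ω else 0))
          + (if S u ω = w - 1 ∧ X (u + 1) ω = 1 then μ ω else 0)) :=
          Finset.sum_congr rfl fun ω _ => hpt ω
      _ = ((∑ ω, if S u ω = w then μ ω else 0)
            - (∑ ω, if S u ω = w ∧ X (u + 1) ω = 1 then μ ω else 0))
          + (∑ ω, if S u ω = w - 1 ∧ X (u + 1) ω = 1 then μ ω else 0) := by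
          rw [Finset.sum_add_distrib, Finset.sum_sub_distrib]
      _ = _ := by rw [e1, e2]; ring
  -- the master induction
  have master : ∀ t : ℕ, t ≤ n →
      (∀ ω, μ ω ≠ 0 → S t ω = ⌊s t⌋ ∨ S t ω = ⌈s t⌉)
      ∧ (∑ ω, if S t ω = ⌊s t⌋ then μ ω else 0) = ⌊s t⌋ + 1 - s t := by
    intro t
    induction t with
    | zero =>
      intro _
      constructor
      · intro ω _; left; rw [hS0, hs0]; simp
      · rw [hs0]; simp [hS0, hμ1]
    | succ u IH =>
      intro hun
      obtain ⟨suppu, distu⟩ := IH (by omega)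
      have hxm := hx (u + 1) (by omega) hun
      have hx0 : 0 ≤ x (u + 1) := hxm.1
      have hx1 : x (u + 1) ≤ 1 := hxm.2
      have hss := hsstep u
      have hfl : (⌊s u⌋ : ℝ) ≤ s u := Int.floor_le _
      have hfu : s u < ⌊s u⌋ + 1 := Int.lt_floor_add_one _
      have hfl' : (⌊s (u + 1)⌋ : ℝ) ≤ s (u + 1) := Int.floor_le _
      have hfu' : s (u + 1) < ⌊s (u + 1)⌋ + 1 := Int.lt_floor_add_one _
      have hab : ⌊s u⌋ ≤ ⌊s (u + 1)⌋ := Int.floor_le_floor (by linarith)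
      have hba : ⌊s (u + 1)⌋ ≤ ⌊s u⌋ + 1 := by
        have h2 : s (u + 1) < ((⌊s u⌋ + 1 + 1 : ℤ) : ℝ) := by push_cast; linarith
        have := Int.floor_lt.mpr h2
        omega
      have hcu := Int.ceil_le_floor_add_one (s u)
      have hfcu := Int.floor_le_ceil (s u)
      have hcu' := Int.ceil_le_floor_add_one (s (u + 1))
      have hfcu' := Int.floor_le_ceil (s (u + 1))
      -- probability values
      have hp1 : ∀ v : ℤ, v < ⌊s (u + 1)⌋ → p (u + 1) v = 1 := by
        intro v hv; rw [hp' u v, if_pos hv]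
      have hp0 : ∀ v : ℤ, ⌊s (u + 1)⌋ < v → p (u + 1) v = 0 := by
        intro v hv; rw [hp' u v, if_neg (by omega), if_neg (by omega)]
      have hpb : p (u + 1) ⌊s (u + 1)⌋ =
          if ⌊s (u + 1)⌋ = ⌊s u⌋ then x (u + 1) / (⌊s u⌋ + 1 - s u)
          else (s (u + 1) - ⌊s (u + 1)⌋) / (s u - ⌊s u⌋) := by
        rw [hp' u _, if_neg (lt_irrefl _), if_pos rfl]
      -- support step
      have suppstep : ∀ ω, μ ω ≠ 0 → S (u + 1) ω = ⌊s (u + 1)⌋ ∨ S (u + 1) ω = ⌈s (u + 1)⌉ := by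
        intro ω hω
        have hv := suppu ω hω
        have hst := hSstep u ω
        rcases lt_trichotomy (S u ω) ⌊s (u + 1)⌋ with hlt | heq | hgt
        · have hX1 : X (u + 1) ω = 1 := hforce1 u hun (S u ω) (hp1 _ hlt) ω hω rfl
          left
          rw [hst, hX1]
          omega
        · rcases hX01 (u + 1) ω with h0 | hX1
          · left; rw [hst, h0, add_zero, heq]
          · by_cases hint : s (u + 1) = (⌊s (u + 1)⌋ : ℝ)
            · exfalso
              have hpz : p (u + 1) ⌊s (u + 1)⌋ = 0 := by
                rw [hpb]
                split_ifs with hfe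
                · have hcast : ((⌊s (u + 1)⌋ : ℤ) : ℝ) = ((⌊s u⌋ : ℤ) : ℝ) := by
                    exact_mod_cast hfe
                  have hxz : x (u + 1) = 0 := by
                    rw [hint, hcast] at hss
                    linarith
                  rw [hxz, zero_div]
                · rw [hint]
                  simp
              have hX0 := hforce0 u hun (S u ω) (by rw [heq]; exact hpz) ω hω rfl
              rw [hX0] at hX1
              exact one_ne_zero hX1.symm
            · right
              have hlts : (⌊s (u + 1)⌋ : ℝ) < s (u + 1) := lt_of_le_of_ne hfl' (Ne.symm hint)
              have hceil : ⌈s (u + 1)⌉ = ⌊s (u + 1)⌋ + 1 := by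
                have := Int.lt_ceil.mpr hlts
                omega
              rw [hceil, hst, hX1, heq]
        · -- S u ω > ⌊s (u+1)⌋, so s u is not an integer and X is forced to 0
          have hveq : S u ω = ⌈s u⌉ := by
            rcases hv with h | h
            · omega
            · exact h
          have hX0 : X (u + 1) ω = 0 :=
            hforce0 u hun (S u ω) (hp0 _ hgt) ω hω rfl
          have hsu_lt : (⌊s u⌋ : ℝ) < s u := by
            rcases lt_or_eq_of_le hfl with h | h
            · exact h
            · exfalso
              have : ⌈s u⌉ = ⌊s u⌋ := by
                rw [← h]
                simp
              omega
          have hbfl : ⌊s (u + 1)⌋ = ⌊s u⌋ := by omega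
          have hlts : ((⌊s (u + 1)⌋ : ℤ) : ℝ) < s (u + 1) := by
            have : ((⌊s (u + 1)⌋ : ℤ) : ℝ) = ((⌊s u⌋ : ℤ) : ℝ) := by exact_mod_cast hbfl
            rw [this]
            linarith
          have hceil : ⌈s (u + 1)⌉ = ⌊s (u + 1)⌋ + 1 := by
            have := Int.lt_ceil.mpr hlts
            omega
          right
          rw [hceil, hst, hX0, add_zero]
          omega
      refine ⟨suppstep, ?_⟩
      -- distribution step
      have key := key_split u hun ⌊s (u + 1)⌋
      have hD : (0:ℝ) < (⌊s u⌋ : ℝ) + 1 - s u := by linarith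
      have hE0 : (0:ℝ) ≤ s u - (⌊s u⌋ : ℝ) := by linarith
      have hPva1 : (∑ ω, if S u ω = ⌊s u⌋ + 1 then μ ω else 0) = s u - ⌊s u⌋ := by
        have := htotal u suppu
        linarith [distu]
      by_cases hcase : ⌊s (u + 1)⌋ = ⌊s u⌋
      · -- floor unchanged
        have hcastc : ((⌊s (u + 1)⌋ : ℤ) : ℝ) = ((⌊s u⌋ : ℤ) : ℝ) := by exact_mod_cast hcase
        have hPm1 : (∑ ω, if S u ω = ⌊s (u + 1)⌋ - 1 then μ ω else 0) = 0 := by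
          apply hsupp_zero u suppu
          · omega
          · omega
        have hpbv : p (u + 1) ⌊s (u + 1)⌋ = x (u + 1) / ((⌊s u⌋ : ℝ) + 1 - s u) := by
          rw [hpb, if_pos hcase]
        have hPfl : (∑ ω, if S u ω = ⌊s (u + 1)⌋ then μ ω else 0)
            = (⌊s u⌋ : ℝ) + 1 - s u := by rw [hcase]; exact distu
        rw [key, hpbv, hPm1, mul_zero, add_zero, hPfl, hcastc]
        rw [sub_mul, one_mul, div_mul_cancel₀ _ (ne_of_gt hD)]
        linarith
      · -- floor increased by one
        have hb1 : ⌊s (u + 1)⌋ = ⌊s u⌋ + 1 := by omega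
        have hcastb : ((⌊s (u + 1)⌋ : ℤ) : ℝ) = ((⌊s u⌋ : ℤ) : ℝ) + 1 := by
          exact_mod_cast hb1
        have hPm1 : (∑ ω, if S u ω = ⌊s (u + 1)⌋ - 1 then μ ω else 0)
            = (⌊s u⌋ : ℝ) + 1 - s u := by
          have : ⌊s (u + 1)⌋ - 1 = ⌊s u⌋ := by omega
          rw [this, distu]
        have hPb : (∑ ω, if S u ω = ⌊s (u + 1)⌋ then μ ω else 0) = s u - (⌊s u⌋ : ℝ) := by
          rw [hb1, hPva1]
        have hp1' : p (u + 1) (⌊s (u + 1)⌋ - 1) = 1 := hp1 _ (by omega)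
        have hpbv : p (u + 1) ⌊s (u + 1)⌋
            = (s (u + 1) - (⌊s (u + 1)⌋ : ℝ)) / (s u - (⌊s u⌋ : ℝ)) := by
          rw [hpb, if_neg hcase]
        rw [key, hPm1, hPb, hp1', one_mul, hpbv]
        rcases eq_or_lt_of_le hE0 with hEz | hEp
        · -- s u is an integer; then x (u+1) = 1
          have hsu_eq : s u = (⌊s u⌋ : ℝ) := by linarith
          have hxe : x (u + 1) = 1 := by
            have h1 : ((⌊s u⌋ : ℝ) + 1) ≤ s (u + 1) := by
              rw [← hcastb]; exact hfl'
            linarith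
          rw [← hEz, mul_zero, zero_add, hcastb]
          linarith
        · have hEne : s u - ((⌊s u⌋ : ℤ) : ℝ) ≠ 0 := ne_of_gt hEp
          rw [hcastb, sub_mul, one_mul, div_mul_cancel₀ _ hEne]
          linarith
  -- now the three conclusions
  refine ⟨?_, fun t ht ω hω => (master t ht).1 ω hω, ?_⟩
  · -- p t v ∈ [0,1]
    intro t h1t h2t v _
    obtain ⟨u, rfl⟩ : ∃ u, t = u + 1 := ⟨t - 1, by omega⟩
    have hxm := hx (u + 1) (by omega) h2t
    have hss := hsstep u
    have hfl : (⌊s u⌋ : ℝ) ≤ s u := Int.floor_le _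
    have hfu : s u < ⌊s u⌋ + 1 := Int.lt_floor_add_one _
    have hfl' : (⌊s (u + 1)⌋ : ℝ) ≤ s (u + 1) := Int.floor_le _
    have hfu' : s (u + 1) < ⌊s (u + 1)⌋ + 1 := Int.lt_floor_add_one _
    rcases lt_trichotomy v ⌊s (u + 1)⌋ with hlt | heq | hgt
    · rw [hp' u v, if_pos hlt]
      exact ⟨zero_le_one, le_refl 1⟩
    · rw [hp' u v, if_neg (by omega), if_pos heq]
      split_ifs with hfe
      · have hcast : ((⌊s (u + 1)⌋ : ℤ) : ℝ) = ((⌊s u⌋ : ℤ) : ℝ) := by exact_mod_cast hfe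
        have hD : (0:ℝ) < (⌊s u⌋ : ℝ) + 1 - s u := by linarith
        constructor
        · exact div_nonneg hxm.1 (le_of_lt hD)
        · rw [div_le_one hD]
          rw [hcast] at hfu'
          linarith
      · have hb1 : ⌊s (u + 1)⌋ = ⌊s u⌋ + 1 := by
          have hab : ⌊s u⌋ ≤ ⌊s (u + 1)⌋ := Int.floor_le_floor (by linarith [hxm.1])
          have hba : ⌊s (u + 1)⌋ ≤ ⌊s u⌋ + 1 := by
            have h2 : s (u + 1) < ((⌊s u⌋ + 1 + 1 : ℤ) : ℝ) := by push_cast; linarith [hxm.2]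
            have := Int.floor_lt.mpr h2
            omega
          omega
        have hcastb : ((⌊s (u + 1)⌋ : ℤ) : ℝ) = ((⌊s u⌋ : ℤ) : ℝ) + 1 := by exact_mod_cast hb1
        rcases eq_or_lt_of_le (by linarith : (0:ℝ) ≤ s u - (⌊s u⌋ : ℝ)) with hEz | hEp
        · rw [← hEz, div_zero]
          exact ⟨le_refl 0, zero_le_one⟩
        · constructor
          · exact div_nonneg (by linarith) (le_of_lt hEp)
          · rw [div_le_one hEp]
            rw [hcastb]
            linarith [hxm.2]
    · rw [hp' u v, if_neg (by omega), if_neg (by omega)]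
      exact ⟨le_refl 0, zero_le_one⟩
  · -- marginal preservation
    intro t h1t h2t
    obtain ⟨u, rfl⟩ : ∃ u, t = u + 1 := ⟨t - 1, by omega⟩
    obtain ⟨suppu, distu⟩ := master u (by omega)
    have hxm := hx (u + 1) (by omega) h2t
    have hss := hsstep u
    have hfl : (⌊s u⌋ : ℝ) ≤ s u := Int.floor_le _
    have hfu : s u < ⌊s u⌋ + 1 := Int.lt_floor_add_one _
    have hfl' : (⌊s (u + 1)⌋ : ℝ) ≤ s (u + 1) := Int.floor_le _
    have hfu' : s (u + 1) < ⌊s (u + 1)⌋ + 1 := Int.lt_floor_add_one _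
    have hcu := Int.ceil_le_floor_add_one (s u)
    have hfcu := Int.floor_le_ceil (s u)
    have hab : ⌊s u⌋ ≤ ⌊s (u + 1)⌋ := Int.floor_le_floor (by linarith [hxm.1])
    have hba : ⌊s (u + 1)⌋ ≤ ⌊s u⌋ + 1 := by
      have h2 : s (u + 1) < ((⌊s u⌋ + 1 + 1 : ℤ) : ℝ) := by push_cast; linarith [hxm.2]
      have := Int.floor_lt.mpr h2
      omega
    have hD : (0:ℝ) < (⌊s u⌋ : ℝ) + 1 - s u := by linarith
    have hPva1 : (∑ ω, if S u ω = ⌊s u⌋ + 1 then μ ω else 0) = s u - ⌊s u⌋ := by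
      have := htotal u suppu
      linarith [distu]
    -- expectation splits over the two support points
    have hsplit : (∑ ω, μ ω * (X (u + 1) ω : ℝ))
        = (∑ ω, if S u ω = ⌊s u⌋ ∧ X (u + 1) ω = 1 then μ ω else 0)
          + (∑ ω, if S u ω = ⌊s u⌋ + 1 ∧ X (u + 1) ω = 1 then μ ω else 0) := by
      rw [← Finset.sum_add_distrib]
      refine Finset.sum_congr rfl fun ω _ => ?_
      by_cases hω : μ ω = 0
      · split_ifs <;> simp [hω]
      · rcases hX01 (u + 1) ω with h0 | h1'
        · rw [h0]
          rw [if_neg (by simp [h0]), if_neg (by simp [h0])]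
          simp
        · rw [h1']
          have h2 : S u ω = ⌊s u⌋ ∨ S u ω = ⌊s u⌋ + 1 := by
            rcases suppu ω hω with h | h <;> omega
          rcases h2 with h | h
          · rw [if_pos ⟨h, rfl⟩, if_neg (by omega)]
            simp
          · rw [if_neg (by omega), if_pos ⟨h, rfl⟩]
            simp
    rw [hsplit, hcond' u h2t ⌊s u⌋, hcond' u h2t (⌊s u⌋ + 1), distu, hPva1]
    by_cases hcase : ⌊s (u + 1)⌋ = ⌊s u⌋
    · have hcastc : ((⌊s (u + 1)⌋ : ℤ) : ℝ) = ((⌊s u⌋ : ℤ) : ℝ) := by exact_mod_cast hcase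
      have hpa : p (u + 1) ⌊s u⌋ = x (u + 1) / ((⌊s u⌋ : ℝ) + 1 - s u) := by
        rw [hp' u _, if_neg (by omega), if_pos (by omega), if_pos hcase]
      have hpa1 : p (u + 1) (⌊s u⌋ + 1) = 0 := by
        rw [hp' u _, if_neg (by omega), if_neg (by omega)]
      rw [hpa, hpa1, zero_mul, add_zero]
      exact div_mul_cancel₀ _ (ne_of_gt hD)
    · have hb1 : ⌊s (u + 1)⌋ = ⌊s u⌋ + 1 := by omega
      have hcastb : ((⌊s (u + 1)⌋ : ℤ) : ℝ) = ((⌊s u⌋ : ℤ) : ℝ) + 1 := by exact_mod_cast hb1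
      have hpa : p (u + 1) ⌊s u⌋ = 1 := by
        rw [hp' u _, if_pos (by omega)]
      have hpa1 : p (u + 1) (⌊s u⌋ + 1)
          = (s (u + 1) - (⌊s (u + 1)⌋ : ℝ)) / (s u - (⌊s u⌋ : ℝ)) := by
        rw [hp' u _, if_neg (by omega), if_pos (by omega), if_neg hcase]
      rw [hpa, hpa1, one_mul]
      rcases eq_or_lt_of_le (by linarith : (0:ℝ) ≤ s u - (⌊s u⌋ : ℝ)) with hEz | hEp
      · have hsu_eq : s u = (⌊s u⌋ : ℝ) := by linarith
        have hxe : x (u + 1) = 1 := by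
          have h1 : ((⌊s u⌋ : ℝ) + 1) ≤ s (u + 1) := by
            rw [← hcastb]; exact hfl'
          linarith [hxm.2]
        rw [← hEz, mul_zero, add_zero]
        linarith
      · rw [div_mul_eq_mul_div, mul_div_assoc, div_self (ne_of_gt hEp), mul_one, hcastb]
        linarith
end

section
/- Let d, t, k be positive integers and α = (d + t - 1)/t. Suppose non-negative reals x*_{i,ℓ} (i ∈ [d], ℓ ∈ [k]) satisfy ∑_{i=1}^d ∑_{ℓ=1}^k x*_{i,ℓ} ≥ t. If integers X_{i,ℓ} ≥ 0 satisfy ∑_{ℓ=1}^k X_{i,ℓ} ≥ ⌊α · ∑_{ℓ=1}^k x*_{i,ℓ}⌋ for each i, then ∑_{i=1}^d ∑_{ℓ=1}^k X_{i,ℓ} ≥ t. -/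
theorem stmt14 (d t k : ℕ) (hd : 0 < d) (ht : 0 < t) (hk : 0 < k)
    (α : ℝ) (hα : α = ((d : ℝ) + t - 1) / t)
    (x : Fin d → Fin k → ℝ) (hx : ∀ i ℓ, 0 ≤ x i ℓ)
    (hcov : (t : ℝ) ≤ ∑ i, ∑ ℓ, x i ℓ)
    (X : Fin d → Fin k → ℤ) (hX : ∀ i ℓ, 0 ≤ X i ℓ)
    (hround : ∀ i, ⌊α * ∑ ℓ, x i ℓ⌋ ≤ ∑ ℓ, X i ℓ) :
    (t : ℤ) ≤ ∑ i, ∑ ℓ, X i ℓ := by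
  have ht' : (0 : ℝ) < t := by exact_mod_cast ht
  have hα0 : (0 : ℝ) ≤ α := by
    rw [hα]
    apply div_nonneg _ ht'.le
    have : (1 : ℝ) ≤ d := by exact_mod_cast hd
    linarith
  have hfloor : (t : ℤ) ≤ ∑ i, ⌊α * ∑ ℓ, x i ℓ⌋ := by
    have hgt : ((t : ℤ) - 1 : ℝ) < ∑ i, (⌊α * ∑ ℓ, x i ℓ⌋ : ℝ) := by
      have h1 : ∀ i : Fin d, α * (∑ ℓ, x i ℓ) - 1 < (⌊α * ∑ ℓ, x i ℓ⌋ : ℝ) :=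
        fun i => Int.sub_one_lt_floor _
      have h2 : ∑ i : Fin d, (α * (∑ ℓ, x i ℓ) - 1) < ∑ i, (⌊α * ∑ ℓ, x i ℓ⌋ : ℝ) := by
        apply Finset.sum_lt_sum_of_nonempty
        · exact Finset.univ_nonempty_iff.mpr ⟨⟨0, hd⟩⟩
        · exact fun i _ => h1 i
      have h3 : α * (t : ℝ) - d ≤ ∑ i : Fin d, (α * (∑ ℓ, x i ℓ) - 1) := by
        rw [Finset.sum_sub_distrib, ← Finset.mul_sum]
        simp only [Finset.sum_const, Finset.card_univ, Fintype.card_fin, nsmul_eq_mul, mul_one]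
        have := mul_le_mul_of_nonneg_left hcov hα0
        linarith
      have h4 : α * t = (d : ℝ) + t - 1 := by
        rw [hα]; field_simp
      push_cast
      linarith
    have : (t : ℤ) - 1 < ∑ i, ⌊α * ∑ ℓ, x i ℓ⌋ := by exact_mod_cast hgt
    omega
  calc (t : ℤ) ≤ ∑ i, ⌊α * ∑ ℓ, x i ℓ⌋ := hfloor
    _ ≤ ∑ i, ∑ ℓ, X i ℓ := Finset.sum_le_sum fun i _ => hround i
end

section
/- For ε, δ ∈ [0,1] with ε + δ > 0, let θ = δ/(ε+δ), and let S ⊆ [n] with values x_i ∈ [0,1], ∑_{i∈S} x_i ≤ 1. Partition S into L (the 'low' part, itself partitioned into bins B with ∑_{i∈B} x_i ≥ (1-θ)/2 for all bins except possibly one bin B*) and H = S∖L. Suppose f(z) := exp(-z(1+δ)) - (1 - z(1-ε)) ≥ 0 for all z ≥ (1-θ)/2. Then 1 - exp(-(1+δ)∑_{i∈H} x_i) · ∏_{B bin of L} (1 - (1-ε)∑_{i∈B} x_i) ≥ [1 - exp(-1-δ+(ε+δ)/(1-ε)) · (1-ε)/(1+δ)] · ∑_{i∈S} x_i, provided ∑_{i∈S}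 x_i = 1. -/
/-!
Every bin other than `B*` has mass at least `(1 - θ)/2`, so by the hypothesis on `f` its factor
`1 - (1 - ε) m` is at most `exp (-(1 + δ) m)`. Since the total mass is `1`, the product is then
bounded by `exp (-(1 + δ) (1 - y)) (1 - (1 - ε) y)`, where `y` is the mass of `B*`, and
`1 + t ≤ exp t` bounds this uniformly in `y` by its value at `y* = (ε + δ)/((1 - ε)(1 + δ))`.
-/

open Finset Real

lemma exp_neg_mul_one_sub_mul_one_sub_mul_le {a b : ℝ} (ha : 0 < a) (hb : 0 < b) (y : ℝ) :
    exp (-a * (1 - y)) * (1 - b * y) ≤ exp (-a + (a - b) / b) * (b / a) := by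
  set t : ℝ := (a - b) / b - a * y with ht
  have hsplit : -a + (a - b) / b = -a * (1 - y) + t := by ring
  have htangent : 1 - b * y ≤ exp t * (b / a) :=
    calc 1 - b * y = (t + 1) * (b / a) := by rw [ht]; field_simp; ring
      _ ≤ exp t * (b / a) := by gcongr; exact add_one_le_exp t
  rw [hsplit, exp_add, mul_assoc]
  gcongr

lemma Finset.prod_le_exp_sum {κ : Type*} {s : Finset κ} {f g : κ → ℝ}
    (h0 : ∀ k ∈ s, 0 ≤ f k) (h : ∀ k ∈ s, f k ≤ exp (g k)) :
    ∏ k ∈ s, f k ≤ exp (∑ k ∈ s, g k) := by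
  rw [exp_sum]
  exact prod_le_prod h0 h

lemma exists_prod_one_sub_mul_le {κ : Type*} [DecidableEq κ] (s : Finset κ) (j : κ)
    (m : κ → ℝ) (a b : ℝ) (h0 : ∀ k ∈ s, 0 ≤ 1 - b * m k)
    (h : ∀ k ∈ s, k ≠ j → 1 - b * m k ≤ exp (-a * m k)) :
    ∃ y, ∏ k ∈ s, (1 - b * m k) ≤ exp (-a * (∑ k ∈ s, m k - y)) * (1 - b * y) := by
  by_cases hj : j ∈ s
  · refine ⟨m j, ?_⟩
    rw [← mul_prod_erase s _ hj, ← sum_erase_eq_sub hj, mul_sum, mul_comm (exp _)]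
    exact mul_le_mul_of_nonneg_left
      (prod_le_exp_sum (fun k hk => h0 k (mem_of_mem_erase hk))
        fun k hk => h k (mem_of_mem_erase hk) (ne_of_mem_erase hk))
      (h0 j hj)
  · refine ⟨0, ?_⟩
    rw [sub_zero, mul_zero, sub_zero, mul_one, mul_sum]
    exact prod_le_exp_sum h0 fun k hk => h k hk (ne_of_mem_of_not_mem hk hj)

theorem stmt16_general {ι : Type*} [DecidableEq ι]
    (ε δ : ℝ) (hε : ε ∈ Set.Ico (0:ℝ) 1) (hδ : δ ∈ Set.Icc (0:ℝ) 1)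
    (θ : ℝ)
    (S L H : Finset ι)
    (x : ι → ℝ) (hx : ∀ i, x i ∈ Set.Icc (0:ℝ) 1)
    (hsum : ∑ i ∈ S, x i = 1)
    (hLH : Disjoint L H) (hS : S = L ∪ H)
    (bins : Finset (Finset ι))
    (hcover : L = bins.biUnion id)
    (hdisj : ∀ B ∈ bins, ∀ B' ∈ bins, B ≠ B' → Disjoint B B')
    (Bstar : Finset ι)
    (hheavy : ∀ B ∈ bins, B ≠ Bstar → (1 - θ) / 2 ≤ ∑ i ∈ B, x i)
    (hf : ∀ z : ℝ, (1 - θ) / 2 ≤ z →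
      0 ≤ Real.exp (-z * (1 + δ)) - (1 - z * (1 - ε))) :
    (1 - Real.exp (-1 - δ + (ε + δ) / (1 - ε)) * ((1 - ε) / (1 + δ))) * ∑ i ∈ S, x i
      ≤ 1 - Real.exp (-(1 + δ) * ∑ i ∈ H, x i)
            * ∏ B ∈ bins, (1 - (1 - ε) * ∑ i ∈ B, x i) := by
  obtain ⟨hε0, hε1⟩ := hε
  have hmass_le : ∀ B ∈ bins, ∑ i ∈ B, x i ≤ 1 := fun B hB =>
    hsum ▸ sum_le_sum_of_subset_of_nonneg
      ((hcover ▸ subset_biUnion_of_mem id hB).trans (hS ▸ subset_union_left))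
      fun i _ _ => (hx i).1
  have hfactor_nonneg : ∀ B ∈ bins, 0 ≤ 1 - (1 - ε) * ∑ i ∈ B, x i := fun B hB => by
    nlinarith [hmass_le B hB, sum_nonneg fun i (_ : i ∈ B) => (hx i).1]
  have hmass : ∑ B ∈ bins, ∑ i ∈ B, x i = 1 - ∑ i ∈ H, x i := by
    rw [← hsum, hS, sum_union hLH, hcover, sum_biUnion (t := id) hdisj]
    simp only [id, add_sub_cancel_right]
  have hfactor_le : ∀ B ∈ bins, B ≠ Bstar →
      1 - (1 - ε) * ∑ i ∈ B, x i ≤ exp (-(1 + δ) * ∑ i ∈ B, x i) := fun B hB hne => by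
    have h := hf _ (hheavy B hB hne)
    rw [neg_mul, mul_comm, ← neg_mul] at h
    linarith
  obtain ⟨y, hy⟩ := exists_prod_one_sub_mul_le bins Bstar (fun B => ∑ i ∈ B, x i) (1 + δ)
    (1 - ε) hfactor_nonneg hfactor_le
  have hbound := exp_neg_mul_one_sub_mul_one_sub_mul_le (a := 1 + δ) (b := 1 - ε)
    (by linarith [hδ.1]) (by linarith) y
  rw [hmass] at hy
  rw [hsum, mul_one, sub_le_sub_iff_left]
  calc exp (-(1 + δ) * ∑ i ∈ H, x i) * ∏ B ∈ bins, (1 - (1 - ε) * ∑ i ∈ B, x i)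
      ≤ exp (-(1 + δ) * ∑ i ∈ H, x i)
          * (exp (-(1 + δ) * (1 - ∑ i ∈ H, x i - y)) * (1 - (1 - ε) * y)) := by gcongr
    _ = exp (-(1 + δ) * (1 - y)) * (1 - (1 - ε) * y) := by
      rw [← mul_assoc, ← exp_add]
      ring_nf
    _ ≤ exp (-1 - δ + (ε + δ) / (1 - ε)) * ((1 - ε) / (1 + δ)) := by
      convert hbound using 3
      ring

theorem stmt16 {ι : Type*} [DecidableEq ι]
    (ε δ : ℝ) (hε : ε ∈ Set.Ico (0:ℝ) 1) (hδ : δ ∈ Set.Icc (0:ℝ) 1)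
    (hpos : 0 < ε + δ) (θ : ℝ) (hθ : θ = δ / (ε + δ))
    (S L H : Finset ι)
    (x : ι → ℝ) (hx : ∀ i, x i ∈ Set.Icc (0:ℝ) 1)
    (hsum : ∑ i ∈ S, x i = 1)
    (hLH : Disjoint L H) (hS : S = L ∪ H)
    (bins : Finset (Finset ι))
    (hbinsL : ∀ B ∈ bins, B ⊆ L)
    (hcover : L = bins.biUnion id)
    (hdisj : ∀ B ∈ bins, ∀ B' ∈ bins, B ≠ B' → Disjoint B B')
    (Bstar : Finset ι)
    (hheavy : ∀ B ∈ bins, B ≠ Bstar → (1 - θ) / 2 ≤ ∑ i ∈ B, x i)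
    (hf : ∀ z : ℝ, (1 - θ) / 2 ≤ z →
      0 ≤ Real.exp (-z * (1 + δ)) - (1 - z * (1 - ε))) :
    (1 - Real.exp (-1 - δ + (ε + δ) / (1 - ε)) * ((1 - ε) / (1 + δ))) * ∑ i ∈ S, x i
      ≤ 1 - Real.exp (-(1 + δ) * ∑ i ∈ H, x i)
            * ∏ B ∈ bins, (1 - (1 - ε) * ∑ i ∈ B, x i) :=
  stmt16_general ε δ hε hδ θ S L H x hx hsum hLH hS bins hcover hdisj Bstar hheavy hf
end

section
/- Let v_1, ..., v_n ≥ 0 and let R be a random subset of [n]. Define α := min over nonempty S ⊆ [n] with ∑_{i∈S} v_i > 0 of P[R ∩ S ≠ ∅] / ∑_{i∈S} v_i. Then there exist conditional probabilities p_{i,S} ≥ 0 with p_{i,S} = 0 when i ∉ S and ∑_i p_{i,S} ≤ 1 for all S, such that ∑_{S} P[R = S] · p_{i,S} ≥ α · v_i for every i ∈ [n]. -/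
/-!
This is LP duality for a bipartite supply–demand problem. If no selection rule met the demands
`d i = α * v i`, separating the compact convex set of achievable selection probabilities from the
orthant `{x | d ≤ x}` would give weights `y ≥ 0` with `∑ i, y i * d i > E[max_{i ∈ R} y i]`, the
right side being the best value any rule achieves for `y` (pick the element of `R` of largest
weight). Conversely, peeling `y` into layers `c • 1_S` and applying the cut condition
`∑ i ∈ S, d i ≤ P[R ∩ S ≠ ∅]` to each layer gives `∑ i, y i * d i ≤ E[max_{i ∈ R} y i]`.
-/

open Finset

theorem Monotone.map_fold_max {α β γ : Type*} [LinearOrder β] [LinearOrder γ] {g : β → γ}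
    (hg : Monotone g) (s : Finset α) (b : β) (f : α → β) :
    s.fold max (g b) (fun x => g (f x)) = g (s.fold max b f) :=
  fold_hom fun _ _ => hg.map_max

theorem fold_max_ite_mem {ι : Type*} [DecidableEq ι] (T S : Finset ι) {c : ℝ} (hc : 0 ≤ c) :
    T.fold max 0 (fun i => if i ∈ S then c else 0) = if (T ∩ S).Nonempty then c else 0 := by
  split_ifs with hTS
  · obtain ⟨j, hj⟩ := hTS
    refine le_antisymm ((fold_max_le _).2 ⟨hc, fun i _ => ?_⟩)
      ((le_fold_max _).2 (.inr ⟨j, (mem_inter.1 hj).1, by simp [(mem_inter.1 hj).2]⟩))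
    split_ifs <;> simp [hc]
  · refine le_antisymm ((fold_max_le _).2 ⟨le_rfl, fun i hi => ?_⟩)
      ((le_fold_max _).2 (.inl le_rfl))
    rw [if_neg fun hiS => hTS ⟨i, mem_inter.2 ⟨hi, hiS⟩⟩]

theorem min_add_max_sub_zero {α : Type*} [AddCommGroup α] [LinearOrder α] [IsOrderedAddMonoid α]
    (a c : α) : min a c + max (a - c) 0 = a := by
  rcases le_total a c with h | h
  · rw [min_eq_left h, max_eq_right (sub_nonpos.2 h), add_zero]
  · rw [min_eq_right h, max_eq_left (sub_nonneg.2 h), add_sub_cancel]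

theorem LinearMap.map_nonneg_of_lt_map_of_le {E : Type*} [AddCommGroup E] [PartialOrder E]
    [IsOrderedAddMonoid E] [Module ℝ E] [PosSMulMono ℝ E] (φ : E →ₗ[ℝ] ℝ) {d : E} {v : ℝ}
    (h : ∀ b, d ≤ b → v < φ b) {x : E} (hx : 0 ≤ x) : 0 ≤ φ x := by
  by_contra! hφx
  have hd := h d le_rfl
  set t := (φ d - v) / -φ x
  have ht : 0 ≤ t := div_nonneg (by linarith) (by linarith)
  have hb := h (d + t • x) (le_add_of_nonneg_right (smul_nonneg ht hx))
  rw [map_add, map_smul, smul_eq_mul, div_mul_eq_mul_div, div_neg,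
    mul_div_cancel_right₀ _ hφx.ne] at hb
  linarith

variable {ι : Type*} [Fintype ι]

variable (ι) in
def selectionRules : Set (ι → Finset ι → ℝ) :=
  {p | (∀ i S, 0 ≤ p i S) ∧ (∀ i S, i ∉ S → p i S = 0) ∧ ∀ S, ∑ i, p i S ≤ 1}

theorem convex_selectionRules : Convex ℝ (selectionRules ι) := by
  rintro p ⟨hp₀, hpS, hp₁⟩ q ⟨hq₀, hqS, hq₁⟩ a b ha hb hab
  refine ⟨fun i S => ?_, fun i S hiS => ?_, fun S => ?_⟩
  · exact add_nonneg (mul_nonneg ha (hp₀ i S)) (mul_nonneg hb (hq₀ i S))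
  · simp [hpS i S hiS, hqS i S hiS]
  · simp only [Pi.add_apply, Pi.smul_apply, smul_eq_mul, sum_add_distrib, ← mul_sum]
    nlinarith [hp₁ S, hq₁ S]

theorem isCompact_selectionRules : IsCompact (selectionRules ι) := by
  refine (isCompact_Icc (a := 0) (b := 1)).of_isClosed_subset ?_ fun p ⟨hp₀, _, hp₁⟩ =>
    ⟨fun i S => hp₀ i S, fun i S => (single_le_sum (fun j _ => hp₀ j S) (mem_univ i)).trans (hp₁ S)⟩
  simp only [selectionRules, Set.ofPred_and, Set.ofPred_forall]
  refine .inter ?_ (.inter ?_ ?_)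
  · exact isClosed_iInter fun i => isClosed_iInter fun S => isClosed_le (by fun_prop) (by fun_prop)
  · exact isClosed_iInter fun i => isClosed_iInter fun S => isClosed_iInter fun _ =>
      isClosed_eq (by fun_prop) (by fun_prop)
  · exact isClosed_iInter fun S => isClosed_le (by fun_prop) (by fun_prop)

theorem exists_mem_selectionRules_sum_mul_eq_fold_max {y : ι → ℝ} (hy : 0 ≤ y) :
    ∃ p ∈ selectionRules ι, ∀ S, ∑ i, p i S * y i = S.fold max 0 y := by
  classical
  have greedy (S : Finset ι) : ∃ q : ι → ℝ, (∀ i, 0 ≤ q i) ∧ (∀ i, i ∉ S → q i = 0) ∧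
      ∑ i, q i ≤ 1 ∧ ∑ i, q i * y i = S.fold max 0 y := by
    rcases S.eq_empty_or_nonempty with rfl | hS
    · exact ⟨0, fun _ => le_rfl, fun _ _ => rfl, by simp, by simp⟩
    obtain ⟨j, hj, hmax⟩ := S.exists_max_image y hS
    refine ⟨Pi.single j 1, fun i => ?_, fun i hi => ?_, by simp, ?_⟩
    · by_cases h : i = j <;> simp [h]
    · simp [show i ≠ j by rintro rfl; exact hi hj]
    · simp only [Pi.single_apply, ite_mul, one_mul, zero_mul, sum_ite_eq', mem_univ, if_true]
      exact le_antisymm ((le_fold_max _).2 (.inr ⟨j, hj, le_rfl⟩)) ((fold_max_le _).2 ⟨hy j, hmax⟩)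
  choose q hq₀ hqS hq₁ hqy using greedy
  exact ⟨fun i S => q S i, ⟨fun i S => hq₀ S i, fun i S => hqS S i, hq₁⟩, hqy⟩

section ExpectedMax

variable (P : Finset ι → ℝ)

/-- `E[max_{i ∈ R} y i]` when `P S = P[R = S]`, with the maximum over `∅` taken to be `0`. -/
noncomputable def expectedMax (y : ι → ℝ) : ℝ := ∑ T, P T * T.fold max 0 y

theorem expectedMax_eq_min_add_max_sub (y : ι → ℝ) {c : ℝ} (hc : 0 ≤ c) :
    expectedMax P y =
      expectedMax P (fun i => min (y i) c) + expectedMax P (fun i => max (y i - c) 0) := by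
  simp only [expectedMax, ← sum_add_distrib, ← mul_add]
  refine sum_congr rfl fun T _ => congrArg (P T * ·) ?_
  have hmin := Monotone.map_fold_max (g := fun a => min a c)
    (fun _ _ h => min_le_min_right c h) T 0 y
  have hmax := Monotone.map_fold_max (g := fun a => max (a - c) 0)
    (fun _ _ h => max_le_max_right 0 (sub_le_sub_right h c)) T 0 y
  simp only [min_eq_left hc, zero_sub, max_eq_right (neg_nonpos.2 hc)] at hmin hmax
  rw [hmin, hmax, min_add_max_sub_zero]

variable [DecidableEq ι]

def hitProb (A : Finset ι) : ℝ := ∑ T ∈ univ.filter (fun T : Finset ι => (T ∩ A).Nonempty), P T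

theorem expectedMax_ite_mem (S : Finset ι) {c : ℝ} (hc : 0 ≤ c) :
    expectedMax P (fun i => if i ∈ S then c else 0) = c * hitProb P S := by
  simp only [expectedMax, hitProb, fold_max_ite_mem _ _ hc, sum_filter, mul_sum, mul_ite,
    mul_zero, mul_comm]

theorem sum_mul_le_expectedMax {d : ι → ℝ}
    (hcut : ∀ A : Finset ι, ∑ i ∈ A, d i ≤ hitProb P A) {y : ι → ℝ} (hy : 0 ≤ y) :
    ∑ i, y i * d i ≤ expectedMax P y := by
  obtain ⟨S, hS⟩ : ∃ S : Finset ι, ∀ i, i ∈ S ↔ 0 < y i := ⟨univ.filter (0 < y ·), by simp⟩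
  induction S using Finset.strongInduction generalizing y with
  | H S ih =>
  rcases S.eq_empty_or_nonempty with rfl | hSne
  · have hy0 : y = 0 := funext fun i => (hy i).antisymm' <| not_lt.1 fun hi =>
      notMem_empty i ((hS i).2 hi)
    simp [hy0, expectedMax, fold_const]
  -- Peel off the least positive value `c` of `y`: `y = c • 1_S + (y - c)⁺` on the support `S`.
  obtain ⟨i₀, hi₀, hmin⟩ := S.exists_min_image y hSne
  have hc : 0 < y i₀ := (hS i₀).1 hi₀
  set y' := fun i => max (y i - y i₀) 0
  have hlow (i : ι) : min (y i) (y i₀) = if i ∈ S then y i₀ else 0 := by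
    split_ifs with hi
    · exact min_eq_right (hmin i hi)
    · have : y i = 0 := (hy i).antisymm' (not_lt.1 fun h => hi ((hS i).2 h))
      simp [this, hc.le]
  have hsub : univ.filter (fun i => 0 < y' i) ⊂ S := by
    refine (ssubset_iff_of_subset fun i => ?_).2 ⟨i₀, hi₀, by simp [y']⟩
    simp only [mem_filter, mem_univ, true_and, y', lt_max_iff, sub_pos, lt_self_iff_false,
      or_false, hS]
    exact hc.trans
  have hy' : 0 ≤ y' := fun i => le_max_right _ _
  calc ∑ i, y i * d i
      = ∑ i, (if i ∈ S then y i₀ else 0) * d i + ∑ i, y' i * d i := by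
        simp only [← hlow, y', ← sum_add_distrib, ← add_mul, min_add_max_sub_zero]
    _ = y i₀ * ∑ i ∈ S, d i + ∑ i, y' i * d i := by
        simp only [ite_mul, zero_mul, sum_ite_mem, univ_inter, mul_sum]
    _ ≤ expectedMax P (fun i => if i ∈ S then y i₀ else 0) + expectedMax P y' := by
        rw [expectedMax_ite_mem P S hc.le]
        exact add_le_add (mul_le_mul_of_nonneg_left (hcut S) hc.le)
          (ih _ hsub hy' fun i => by simp)
    _ = expectedMax P y := by simp only [expectedMax_eq_min_add_max_sub P y hc.le, hlow, y']

end ExpectedMax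

theorem exists_mem_selectionRules_of_le_hitProb [DecidableEq ι] (P : Finset ι → ℝ) (d : ι → ℝ)
    (hcut : ∀ A : Finset ι, ∑ i ∈ A, d i ≤ hitProb P A) :
    ∃ p ∈ selectionRules ι, ∀ i, d i ≤ ∑ S, P S * p i S := by
  set L : (ι → Finset ι → ℝ) → ι → ℝ := fun p i => ∑ S, P S * p i S
  by_contra! h
  have hL : IsLinearMap ℝ L :=
    ⟨fun p q => by ext; simp [L, mul_add, sum_add_distrib],
      fun c p => by ext; simp [L, mul_sum, mul_left_comm]⟩
  have hdisj : Disjoint (L '' selectionRules ι) (Set.Ici d) := by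
    refine Set.disjoint_left.2 ?_
    rintro _ ⟨p, hp, rfl⟩ hdp
    obtain ⟨i, hi⟩ := h p hp
    exact hi.not_ge (hdp i)
  obtain ⟨φ, u, v, hu, huv, hv⟩ := geometric_hahn_banach_compact_closed
    (convex_selectionRules.is_linear_image hL) (isCompact_selectionRules.image (by fun_prop))
    (convex_Ici d) isClosed_Ici hdisj
  set y : ι → ℝ := fun i => φ fun j => if i = j then 1 else 0
  have hφ (x : ι → ℝ) : φ x = ∑ i, y i * x i := by
    simpa [mul_comm] using (φ : (ι → ℝ) →ₗ[ℝ] ℝ).pi_apply_eq_sum_univ x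
  have hy : 0 ≤ y := fun i => (φ : (ι → ℝ) →ₗ[ℝ] ℝ).map_nonneg_of_lt_map_of_le hv
    fun j => by by_cases h : i = j <;> simp [h]
  obtain ⟨p, hp, hpy⟩ := exists_mem_selectionRules_sum_mul_eq_fold_max hy
  have hφp : φ (L p) = expectedMax P y := by
    simp only [hφ, L, expectedMax, mul_sum, ← hpy]
    rw [sum_comm]
    exact sum_congr rfl fun S _ => sum_congr rfl fun i _ => by ring
  have hcut_y := sum_mul_le_expectedMax P hcut hy
  linarith [hu _ ⟨p, hp, rfl⟩, hv d Set.self_mem_Ici, hφ d]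

theorem stmt17_general (n : ℕ) (v : Fin n → ℝ) (hv : ∀ i, 0 ≤ v i)
    (P : Finset (Fin n) → ℝ) (hP0 : ∀ S, 0 ≤ P S)
    (α : ℝ)
    (hα : ∀ S : Finset (Fin n), S.Nonempty → 0 < ∑ i ∈ S, v i →
      α * ∑ i ∈ S, v i
        ≤ ∑ T ∈ Finset.univ.filter (fun T : Finset (Fin n) => (T ∩ S).Nonempty), P T) :
    ∃ p : Fin n → Finset (Fin n) → ℝ,
      (∀ i S, 0 ≤ p i S) ∧ (∀ i S, i ∉ S → p i S = 0) ∧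
      (∀ S : Finset (Fin n), ∑ i, p i S ≤ 1) ∧
      (∀ i, α * v i ≤ ∑ S : Finset (Fin n), P S * p i S) := by
  have hcut (A : Finset (Fin n)) : ∑ i ∈ A, α * v i ≤ hitProb P A := by
    rw [← mul_sum]
    rcases (sum_nonneg fun i _ => hv i : 0 ≤ ∑ i ∈ A, v i).eq_or_lt with h | h
    · rw [← h, mul_zero]
      exact sum_nonneg fun T _ => hP0 T
    · exact hα A (nonempty_of_sum_ne_zero h.ne') h
  obtain ⟨p, ⟨hp₀, hpS, hp₁⟩, hp⟩ := exists_mem_selectionRules_of_le_hitProb P _ hcut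
  exact ⟨p, hp₀, hpS, hp₁, hp⟩

theorem stmt17 (n : ℕ) (v : Fin n → ℝ) (hv : ∀ i, 0 ≤ v i)
    (P : Finset (Fin n) → ℝ) (hP0 : ∀ S, 0 ≤ P S)
    (hP1 : ∑ S : Finset (Fin n), P S = 1)
    (α : ℝ) (hα0 : 0 ≤ α)
    (hα : ∀ S : Finset (Fin n), S.Nonempty → 0 < ∑ i ∈ S, v i →
      α * ∑ i ∈ S, v i
        ≤ ∑ T ∈ Finset.univ.filter (fun T : Finset (Fin n) => (T ∩ S).Nonempty), P T) :
    ∃ p : Fin n → Finset (Fin n) → ℝ,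
      (∀ i S, 0 ≤ p i S) ∧ (∀ i S, i ∉ S → p i S = 0) ∧
      (∀ S : Finset (Fin n), ∑ i, p i S ≤ 1) ∧
      (∀ i, α * v i ≤ ∑ S : Finset (Fin n), P S * p i S) :=
  stmt17_general n v hv P hP0 α hα
end

section
/- Let m_{i,t} ∈ [0,1] for i ∈ [n], t ≥ 1, and define ŝ_{i,1} = 0 and ŝ_{i,t+1} = ŝ_{i,t}(1 - m_{i,t}) + m_{i,t}. Suppose events (E_{i,t}) satisfy: E_{i,1} never occurs; at each time step t at most one additional i can switch from not-engaged to engaged; and conditioned on any history with i not engaged at time t, the probability i becomes engaged at step t is at most m_{i,t}. Then for every t and every S ⊆ [n], P[⋂_{i∈S} E_{i,t}] ≤ ∏_{i∈S} ŝ_{i,t}. -/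
/-!
Induction on `t`. Since at most one index of `S` switches at step `t`, the event that all of `S`
is engaged at `t + 1` is covered by "all of `S` engaged at `t`" together with, for each `j ∈ S`,
"all of `S` but `j` engaged at `t` and `j` switches"; the latter has probability at most `m j t`
times that of its history event `E_{S∖j} ∩ F_j`. Pointwise,
`1_{E_S} + ∑ⱼ mⱼ 1_{E_{S∖j} ∩ F_j} ≤ ∏_{i∈S} (1_{E_i} + mᵢ 1_{F_i})`
`= ∏_{i∈S} ((1 - mᵢ) 1_{E_i} + mᵢ)`,
and expanding the last product over subsets `A ⊆ S` and bounding each `P[E_A]` by induction gives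
`∏_{i∈S} ((1 - mᵢ) ŝᵢ + mᵢ) = ∏_{i∈S} ŝ_{i,t+1}`.
-/

open scoped Classical

open Finset MeasureTheory

section Boole

variable {ι R : Type*} [DecidableEq ι]

theorem Finset.prod_add_sum_mul_prod_erase_le_prod_add [CommSemiring R] [PartialOrder R]
    [IsOrderedRing R] (S : Finset ι) {x y : ι → R} (hx : ∀ i ∈ S, 0 ≤ x i)
    (hy : ∀ i ∈ S, 0 ≤ y i) :
    ∏ i ∈ S, x i + ∑ j ∈ S, y j * ∏ i ∈ S.erase j, x i ≤ ∏ i ∈ S, (x i + y i) := by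
  induction S using Finset.induction_on with
  | empty => simp
  | insert a S ha ih =>
    have hxa := hx a (mem_insert_self a S)
    have hya := hy a (mem_insert_self a S)
    have hxS : ∀ i ∈ S, 0 ≤ x i := fun i hi => hx i (mem_insert_of_mem hi)
    have hyS : ∀ i ∈ S, 0 ≤ y i := fun i hi => hy i (mem_insert_of_mem hi)
    have herase : ∀ j ∈ S, ∏ i ∈ (insert a S).erase j, x i = x a * ∏ i ∈ S.erase j, x i :=
      fun j hj => by
        rw [erase_insert_of_ne (ne_of_mem_of_not_mem hj ha).symm,
          prod_insert fun h => ha (mem_of_mem_erase h)]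
    have hprod : ∏ i ∈ S, x i ≤ ∏ i ∈ S, (x i + y i) :=
      prod_le_prod hxS fun i hi => le_add_of_nonneg_right (hyS i hi)
    rw [prod_insert ha, sum_insert ha, erase_insert ha, prod_insert ha,
      sum_congr rfl fun j hj => by rw [herase j hj]]
    calc x a * ∏ i ∈ S, x i + (y a * ∏ i ∈ S, x i + ∑ j ∈ S, y j * (x a * ∏ i ∈ S.erase j, x i))
        = x a * (∏ i ∈ S, x i + ∑ j ∈ S, y j * ∏ i ∈ S.erase j, x i) + y a * ∏ i ∈ S, x i := by
          simp only [mul_add, mul_sum, mul_left_comm (x a)]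
          ring
      _ ≤ x a * ∏ i ∈ S, (x i + y i) + y a * ∏ i ∈ S, (x i + y i) :=
          add_le_add (mul_le_mul_of_nonneg_left (ih hxS hyS) hxa)
            (mul_le_mul_of_nonneg_left hprod hya)
      _ = (x a + y a) * ∏ i ∈ S, (x i + y i) := by ring

theorem sum_mul_prod_mul_add_le {Ω : Type*} [Fintype Ω] [CommSemiring R] [PartialOrder R]
    [IsOrderedRing R] (μ : Ω → R) (S : Finset ι) (x : ι → Ω → R) {a b s : ι → R}
    (ha : ∀ i ∈ S, 0 ≤ a i) (hb : ∀ i ∈ S, 0 ≤ b i)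
    (h : ∀ A ⊆ S, ∑ ω, μ ω * ∏ i ∈ A, x i ω ≤ ∏ i ∈ A, s i) :
    ∑ ω, μ ω * ∏ i ∈ S, (a i * x i ω + b i) ≤ ∏ i ∈ S, (a i * s i + b i) := by
  calc ∑ ω, μ ω * ∏ i ∈ S, (a i * x i ω + b i)
      = ∑ A ∈ S.powerset, ((∏ i ∈ A, a i) * ∏ i ∈ S \ A, b i) * ∑ ω, μ ω * ∏ i ∈ A, x i ω := by
        simp only [prod_add, prod_mul_distrib, mul_sum]
        rw [sum_comm]
        exact sum_congr rfl fun A _ => sum_congr rfl fun ω _ => by ring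
    _ ≤ ∑ A ∈ S.powerset, ((∏ i ∈ A, a i) * ∏ i ∈ S \ A, b i) * ∏ i ∈ A, s i := by
        refine sum_le_sum fun A hA => mul_le_mul_of_nonneg_left (h A (mem_powerset.1 hA)) ?_
        have hAS := mem_powerset.1 hA
        exact mul_nonneg (prod_nonneg fun i hi => ha i (hAS hi))
          (prod_nonneg fun i hi => hb i (mem_sdiff.1 hi).1)
    _ = ∏ i ∈ S, (a i * s i + b i) := by
        rw [prod_add]
        refine sum_congr rfl fun A _ => ?_
        rw [prod_mul_distrib]
        ring

variable [CommRing R] [PartialOrder R] [IsOrderedRing R] (S : Finset ι)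
  {p q : ι → Prop} [DecidablePred p] [DecidablePred q]

theorem boole_forall_le_add_sum_boole_of_unique_switch
    (hswitch : ∀ i j, q i → ¬ p i → q j → ¬ p j → i = j) :
    (if ∀ i ∈ S, q i then (1 : R) else 0) ≤ (if ∀ i ∈ S, p i then 1 else 0)
      + ∑ j ∈ S, if ((∀ i ∈ S.erase j, p i) ∧ ¬ p j) ∧ q j then 1 else 0 := by
  have hsum : (0 : R) ≤ ∑ j ∈ S, if ((∀ i ∈ S.erase j, p i) ∧ ¬ p j) ∧ q j then 1 else 0 :=
    sum_nonneg fun j _ => by split_ifs <;> norm_num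
  by_cases hq : ∀ i ∈ S, q i
  · by_cases hp : ∀ i ∈ S, p i
    · rw [if_pos hq, if_pos hp]
      exact le_add_of_nonneg_right hsum
    · obtain ⟨j, hjS, hj⟩ := not_forall₂.1 hp
      have hothers : ∀ i ∈ S.erase j, p i := fun i hi => by
        by_contra hpi
        exact ne_of_mem_erase hi (hswitch i j (hq i (mem_of_mem_erase hi)) hpi (hq j hjS) hj)
      calc (if ∀ i ∈ S, q i then (1 : R) else 0)
          = if ((∀ i ∈ S.erase j, p i) ∧ ¬ p j) ∧ q j then 1 else 0 := by
            rw [if_pos hq, if_pos ⟨⟨hothers, hj⟩, hq j hjS⟩]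
        _ ≤ ∑ j ∈ S, if ((∀ i ∈ S.erase j, p i) ∧ ¬ p j) ∧ q j then 1 else 0 :=
            single_le_sum
              (f := fun j => if ((∀ i ∈ S.erase j, p i) ∧ ¬ p j) ∧ q j then (1 : R) else 0)
              (fun j _ => by split_ifs <;> norm_num) hjS
        _ ≤ _ := le_add_of_nonneg_left (by rw [if_neg hp])
  · rw [if_neg hq]
    exact add_nonneg (by split_ifs <;> norm_num) hsum

theorem boole_forall_add_sum_le_prod {m : ι → R} (hm : ∀ i ∈ S, 0 ≤ m i) :
    (if ∀ i ∈ S, p i then (1 : R) else 0)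
        + ∑ j ∈ S, m j * (if (∀ i ∈ S.erase j, p i) ∧ ¬ p j then 1 else 0)
      ≤ ∏ i ∈ S, ((1 - m i) * (if p i then 1 else 0) + m i) := by
  calc _ = ∏ i ∈ S, (if p i then (1 : R) else 0)
        + ∑ j ∈ S, m j * (if p j then 0 else 1) * ∏ i ∈ S.erase j, (if p i then 1 else 0) := by
        simp only [prod_boole]
        congr 1
        refine sum_congr rfl fun j _ => ?_
        by_cases hpj : p j <;> simp [hpj]
    _ ≤ ∏ i ∈ S, ((if p i then (1 : R) else 0) + m i * (if p i then 0 else 1)) :=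
        prod_add_sum_mul_prod_erase_le_prod_add S (fun i _ => by split_ifs <;> norm_num)
          fun i hi => mul_nonneg (hm i hi) (by split_ifs <;> norm_num)
    _ = _ := prod_congr rfl fun i _ => by split_ifs <;> ring

end Boole

section Engagement

variable {Ω ι : Type*} [Fintype Ω] [DecidableEq ι] (μ : Ω → ℝ) (E : ι → ℕ → Set Ω)

theorem sum_mul_boole_forall_succ_le {𝓕 : MeasurableSpace Ω} (hμ0 : ∀ ω, 0 ≤ μ ω)
    (m : ι → ℝ) (t : ℕ) (hE : ∀ i, MeasurableSet[𝓕] (E i t))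
    (honce : ∀ ω i j, ω ∈ E i (t + 1) → ω ∉ E i t → ω ∈ E j (t + 1) → ω ∉ E j t → i = j)
    (hcond : ∀ i (H : Set Ω), MeasurableSet[𝓕] H → H ⊆ (E i t)ᶜ →
      (∑ ω, if ω ∈ H ∩ E i (t + 1) then μ ω else 0) ≤ m i * ∑ ω, if ω ∈ H then μ ω else 0)
    (S : Finset ι) :
    ∑ ω, μ ω * (if ∀ i ∈ S, ω ∈ E i (t + 1) then 1 else 0)
      ≤ ∑ ω, μ ω * ((if ∀ i ∈ S, ω ∈ E i t then 1 else 0)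
        + ∑ j ∈ S, m j * if (∀ i ∈ S.erase j, ω ∈ E i t) ∧ ω ∉ E j t then 1 else 0) := by
  have hstep : ∀ j, (∑ ω, μ ω *
        if ((∀ i ∈ S.erase j, ω ∈ E i t) ∧ ω ∉ E j t) ∧ ω ∈ E j (t + 1) then 1 else 0)
      ≤ m j * ∑ ω, μ ω * if (∀ i ∈ S.erase j, ω ∈ E i t) ∧ ω ∉ E j t then 1 else 0 := by
    intro j
    have h := hcond j _ ((measurableSet_biInter (S.erase j) fun i _ => hE i).inter (hE j).compl)
      Set.inter_subset_right
    simp only [mul_boole]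
    convert h using 3 <;> simp [and_assoc]
  calc ∑ ω, μ ω * (if ∀ i ∈ S, ω ∈ E i (t + 1) then 1 else 0)
      ≤ ∑ ω, μ ω * ((if ∀ i ∈ S, ω ∈ E i t then 1 else 0) + ∑ j ∈ S,
          if ((∀ i ∈ S.erase j, ω ∈ E i t) ∧ ω ∉ E j t) ∧ ω ∈ E j (t + 1) then 1 else 0) :=
        sum_le_sum fun ω _ => mul_le_mul_of_nonneg_left
          (boole_forall_le_add_sum_boole_of_unique_switch S (honce ω)) (hμ0 ω)
    _ = ∑ ω, μ ω * (if ∀ i ∈ S, ω ∈ E i t then 1 else 0) + ∑ j ∈ S, ∑ ω, μ ω *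
          if ((∀ i ∈ S.erase j, ω ∈ E i t) ∧ ω ∉ E j t) ∧ ω ∈ E j (t + 1) then 1 else 0 := by
        simp only [mul_add, mul_sum, sum_add_distrib]
        rw [sum_comm]
    _ ≤ ∑ ω, μ ω * (if ∀ i ∈ S, ω ∈ E i t then 1 else 0) + ∑ j ∈ S, m j * ∑ ω, μ ω *
          if (∀ i ∈ S.erase j, ω ∈ E i t) ∧ ω ∉ E j t then 1 else 0 := by
        gcongr with j
        exact hstep j
    _ = _ := by
        simp only [mul_add, mul_sum, sum_add_distrib, mul_left_comm (μ _)]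
        rw [sum_comm]

end Engagement

theorem stmt18_general {Ω ι : Type*} [Fintype Ω]
    (μ : Ω → ℝ) (hμ0 : ∀ ω, 0 ≤ μ ω) (hμ1 : ∑ ω, μ ω = 1)
    (E : ι → ℕ → Set Ω) (m : ι → ℕ → ℝ) (hm : ∀ i t, m i t ∈ Set.Icc (0:ℝ) 1)
    (shat : ι → ℕ → ℝ)
    (hshat1 : ∀ i, shat i 1 = 0)
    (hshatrec : ∀ i t, 1 ≤ t → shat i (t + 1) = shat i t * (1 - m i t) + m i t)
    (hinit : ∀ i, E i 1 = ∅)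
    (honce : ∀ (ω : Ω) (t : ℕ) (i j : ι), ω ∈ E i (t + 1) → ω ∉ E i t →
      ω ∈ E j (t + 1) → ω ∉ E j t → i = j)
    (hcond : ∀ (t : ℕ) (i : ι) (Hst : Set Ω),
      (MeasurableSpace.generateFrom {A | ∃ j t', t' ≤ t ∧ A = E j t'}).MeasurableSet' Hst →
      Hst ⊆ (E i t)ᶜ →
      (∑ ω, if ω ∈ Hst ∩ E i (t + 1) then μ ω else 0)
        ≤ m i t * ∑ ω, if ω ∈ Hst then μ ω else 0) :
    ∀ t, 1 ≤ t → ∀ S : Finset ι,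
      (∑ ω, if ∀ i ∈ S, ω ∈ E i t then μ ω else 0) ≤ ∏ i ∈ S, shat i t := by
  have hhistory : ∀ t i, MeasurableSet[.generateFrom {A | ∃ j t', t' ≤ t ∧ A = E j t'}] (E i t) :=
    fun t i => MeasurableSpace.measurableSet_generateFrom ⟨i, t, le_rfl, rfl⟩
  intro t ht
  induction t, ht using Nat.le_induction with
  | base =>
    intro S
    rcases S.eq_empty_or_nonempty with rfl | ⟨j, hj⟩
    · simp [hμ1]
    · rw [prod_eq_zero hj (hshat1 j)]
      exact (sum_eq_zero fun ω _ => if_neg fun h => by simpa [hinit] using h j hj).le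
  | succ t ht IH =>
    intro S
    have hP : ∀ u (A : Finset ι), (∑ ω, if ∀ i ∈ A, ω ∈ E i u then μ ω else 0)
        = ∑ ω, μ ω * if ∀ i ∈ A, ω ∈ E i u then 1 else 0 := fun u A => by simp only [mul_boole]
    rw [hP]
    calc _ ≤ _ := sum_mul_boole_forall_succ_le μ E hμ0 (m · t) t (hhistory t)
            (fun ω => honce ω t) (hcond t) S
      _ ≤ ∑ ω, μ ω * ∏ i ∈ S, ((1 - m i t) * (if ω ∈ E i t then 1 else 0) + m i t) :=
          sum_le_sum fun ω _ => mul_le_mul_of_nonneg_left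
            (boole_forall_add_sum_le_prod S fun i _ => (hm i t).1) (hμ0 ω)
      _ ≤ ∏ i ∈ S, ((1 - m i t) * shat i t + m i t) :=
          sum_mul_prod_mul_add_le μ S _ (fun i _ => sub_nonneg.2 (hm i t).2)
            (fun i _ => (hm i t).1) fun A _ => by simpa only [prod_boole, hP] using IH A
      _ = ∏ i ∈ S, shat i (t + 1) := prod_congr rfl fun i _ => by rw [hshatrec i t ht]; ring

theorem stmt18 {Ω ι : Type*} [Fintype Ω] [DecidableEq ι]
    (μ : Ω → ℝ) (hμ0 : ∀ ω, 0 ≤ μ ω) (hμ1 : ∑ ω, μ ω = 1)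
    (E : ι → ℕ → Set Ω) (m : ι → ℕ → ℝ) (hm : ∀ i t, m i t ∈ Set.Icc (0:ℝ) 1)
    (shat : ι → ℕ → ℝ)
    (hshat1 : ∀ i, shat i 1 = 0)
    (hshatrec : ∀ i t, 1 ≤ t → shat i (t + 1) = shat i t * (1 - m i t) + m i t)
    (hmono : ∀ i t, E i t ⊆ E i (t + 1))
    (hinit : ∀ i, E i 1 = ∅)
    (honce : ∀ (ω : Ω) (t : ℕ) (i j : ι), ω ∈ E i (t + 1) → ω ∉ E i t →
      ω ∈ E j (t + 1) → ω ∉ E j t → i = j)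
    (hcond : ∀ (t : ℕ) (i : ι) (Hst : Set Ω),
      (MeasurableSpace.generateFrom {A | ∃ j t', t' ≤ t ∧ A = E j t'}).MeasurableSet' Hst →
      Hst ⊆ (E i t)ᶜ →
      (∑ ω, if ω ∈ Hst ∩ E i (t + 1) then μ ω else 0)
        ≤ m i t * ∑ ω, if ω ∈ Hst then μ ω else 0) :
    ∀ t, 1 ≤ t → ∀ S : Finset ι,
      (∑ ω, if ∀ i ∈ S, ω ∈ E i t then μ ω else 0) ≤ ∏ i ∈ S, shat i t :=
  stmt18_general μ hμ0 hμ1 E m hm shat hshat1 hshatrec hinit honce hcond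
end
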